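/- Let δ > 0 and T > 0. For λ > δ² set b_λ := (λ − δ²)^{1/2}, u_λ(T) := (1/b_λ)∫₀ᵀ e^{−δ(T−s)} sin(b_λ(T−s)) cos(b_λ(T−s) − π/4) ds, and u_λ'(T) := −δ u_λ(T) + ∫₀ᵀ e^{−δ(T−s)} cos(b_λ(T−s)) cos(b_λ(T−s) − π/4) ds. Then lim_{λ→+∞} λ^{1/2} u_λ(T) = (√2/4)·(1/δ)·(1 − e^{−δT}) and lim_{λ→+∞} u_λ'(T) = (√2/4)·(1/δ)·(1 − e^{−δT}). -/

import Mathlib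

/-
By the product-to-sum formulas, `sin x cos (x - π/4) = (√2/2 + cos (2x - 3π/4)) / 2` and
`cos x cos (x - π/4) = (√2/2 + cos (2x - π/4)) / 2`. After the substitution `u = T - s`, the
oscillating halves are integrals of `e^{-δu} cos (2 b_λ u + φ)`, which tend to `0` as `b_λ → ∞`
by the Riemann–Lebesgue lemma. Both integrals in `u_λ(T)` and `u_λ'(T)` therefore tend to
`(√2/4) ∫₀ᵀ e^{-δu} du = (√2/4)(1 - e^{-δT})/δ`. Finally `λ^{1/2} / b_λ → 1`, while
`δ u_λ(T) = O(b_λ⁻¹) → 0`.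
-/

open Filter

/-- `b_λ := (λ − δ²)^{1/2}` for `σ = 0`. -/
noncomputable def bl (δ lam : ℝ) : ℝ := (lam - δ ^ 2) ^ ((1 : ℝ) / 2)

/-- `u_λ(T)` for the forcing term `f_λ(t) = cos(b_λ(T−t) − π/4)`. -/
noncomputable def uT (δ T lam : ℝ) : ℝ :=
  (1 / bl δ lam) * ∫ s in (0 : ℝ)..T,
    Real.exp (-δ * (T - s)) * Real.sin (bl δ lam * (T - s)) *
      Real.cos (bl δ lam * (T - s) - Real.pi / 4)

/-- `u_λ'(T)` for the forcing term `f_λ(t) = cos(b_λ(T−t) − π/4)`. -/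
noncomputable def uT' (δ T lam : ℝ) : ℝ :=
  -δ * uT δ T lam + ∫ s in (0 : ℝ)..T,
    Real.exp (-δ * (T - s)) * Real.cos (bl δ lam * (T - s)) *
      Real.cos (bl δ lam * (T - s) - Real.pi / 4)

open Real MeasureTheory Set
open scoped Interval

open Complex in
theorem tendsto_intervalIntegral_exp_mul_I_mul (g : ℝ → ℂ) (a b : ℝ) :
    Tendsto (fun c : ℝ => ∫ x in a..b, exp (c * x * I) * g x) atTop (nhds 0) := by
  have hRL := Real.tendsto_integral_exp_smul_cocompact ((Ι a b).indicator g)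
  -- at frequency `w = -c/(2π)` the character `𝐞 (-(x * w))` is `exp (c x I)`
  have hfreq : Tendsto (fun c : ℝ => -(c / (2 * π))) atTop (cocompact ℝ) :=
    (tendsto_neg_atTop_atBot.comp (tendsto_id.atTop_div_const (by positivity))).mono_right
      atBot_le_cocompact
  rw [tendsto_zero_iff_norm_tendsto_zero]
  refine (tendsto_zero_iff_norm_tendsto_zero.mp (hRL.comp hfreq)).congr fun c => ?_
  rw [intervalIntegral.norm_integral_eq_norm_integral_uIoc,
    ← integral_indicator measurableSet_uIoc]
  congr 1
  refine integral_congr_ae (Eventually.of_forall fun x => ?_)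
  dsimp only
  rw [Set.indicator_mul_right, Circle.smul_def, Real.fourierChar_apply, smul_eq_mul]
  congr 2
  push_cast
  field_simp

open Complex in
theorem tendsto_intervalIntegral_mul_cos_mul_add {g : ℝ → ℝ} {a b : ℝ}
    (hg : IntervalIntegrable g volume a b) (φ : ℝ) :
    Tendsto (fun c : ℝ => ∫ x in a..b, g x * Real.cos (c * x + φ)) atTop (nhds 0) := by
  have hC := (tendsto_intervalIntegral_exp_mul_I_mul (fun x => g x) a b).const_mul (exp (φ * I))
  rw [mul_zero] at hC
  replace hC := (continuous_re.tendsto 0).comp hC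
  rw [zero_re] at hC
  refine hC.congr fun c => ?_
  have hg' : IntervalIntegrable (fun x => (g x : ℂ)) volume a b := ⟨hg.1.ofReal, hg.2.ofReal⟩
  have hint :
      IntervalIntegrable (fun x : ℝ => exp (φ * I) * (exp (c * x * I) * g x)) volume a b :=
    (hg'.continuousOn_mul (by fun_prop)).const_mul _
  rw [Function.comp_apply, ← intervalIntegral.integral_const_mul, ← reCLM_apply,
    ← reCLM.intervalIntegral_comp_comm hint]
  refine intervalIntegral.integral_congr fun x _ => ?_
  have hphase : (φ : ℂ) * I + c * x * I = (c * x + φ : ℝ) * I := by push_cast; ring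
  rw [reCLM_apply, ← mul_assoc, ← Complex.exp_add, hphase, mul_comm, re_ofReal_mul,
    exp_ofReal_mul_I_re]

theorem cos_mul_cos_eq (x y : ℝ) : cos x * cos y = (cos (x - y) + cos (x + y)) / 2 := by
  rw [cos_sub, cos_add]; ring

theorem tendsto_intervalIntegral_mul_cos_mul_cos {g : ℝ → ℝ} {a b : ℝ}
    (hg : IntervalIntegrable g volume a b) (α β : ℝ) :
    Tendsto (fun c : ℝ => ∫ x in a..b, g x * cos (c * x + α) * cos (c * x + β)) atTop
      (nhds (cos (α - β) / 2 * ∫ x in a..b, g x)) := by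
  have hosc := (tendsto_intervalIntegral_mul_cos_mul_add hg (α + β)).comp
    (tendsto_id.const_mul_atTop two_pos)
  have hlim := (hosc.const_mul (1 / 2)).const_add (cos (α - β) / 2 * ∫ x in a..b, g x)
  rw [mul_zero, add_zero] at hlim
  refine hlim.congr fun c => ?_
  have hsplit : ∀ x, g x * cos (c * x + α) * cos (c * x + β) =
      cos (α - β) / 2 * g x + 1 / 2 * (g x * cos (2 * c * x + (α + β))) := fun x => by
    rw [mul_assoc, cos_mul_cos_eq, show c * x + α - (c * x + β) = α - β by ring,
      show c * x + α + (c * x + β) = 2 * c * x + (α + β) by ring]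
    ring
  simp only [hsplit, Function.comp_apply, id]
  rw [intervalIntegral.integral_add (hg.const_mul _)
      ((hg.mul_continuousOn (by fun_prop)).const_mul _),
    intervalIntegral.integral_const_mul, intervalIntegral.integral_const_mul]

theorem tendsto_rpow_div_rpow_sub_const (a r : ℝ) :
    Tendsto (fun x : ℝ => x ^ r / (x - a) ^ r) atTop (nhds 1) := by
  have hquot : Tendsto (fun x : ℝ => (1 - a / x)⁻¹) atTop (nhds 1) := by
    have h := (tendsto_const_nhds (x := (1 : ℝ))).sub
      ((tendsto_const_nhds (x := a)).div_atTop tendsto_id)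
    rw [sub_zero] at h
    simpa using h.inv₀ one_ne_zero
  have hpow := (continuousAt_rpow_const 1 r (Or.inl one_ne_zero)).tendsto.comp hquot
  rw [one_rpow] at hpow
  refine hpow.congr' ?_
  filter_upwards [eventually_gt_atTop (max a 0)] with x hx
  have hx0 : 0 < x := (le_max_right a 0).trans_lt hx
  have hxa : 0 < x - a := sub_pos.mpr ((le_max_left a 0).trans_lt hx)
  rw [Function.comp_apply, ← div_rpow hx0.le hxa.le]
  congr 1
  field_simp

theorem integral_exp_neg_mul {δ : ℝ} (hδ : δ ≠ 0) (T : ℝ) :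
    ∫ u in (0 : ℝ)..T, exp (-δ * u) = (1 - exp (-δ * T)) / δ := by
  rw [intervalIntegral.integral_comp_mul_left (fun u => exp u) (neg_ne_zero.mpr hδ), integral_exp,
    mul_zero, exp_zero, smul_eq_mul]
  field_simp
  ring

theorem tendsto_intervalIntegral_exp_mul_cos_mul_cos_sub (δ T α β : ℝ) :
    Tendsto (fun b : ℝ => ∫ s in (0 : ℝ)..T,
        exp (-δ * (T - s)) * cos (b * (T - s) + α) * cos (b * (T - s) + β)) atTop
      (nhds (cos (α - β) / 2 * ∫ u in (0 : ℝ)..T, exp (-δ * u))) := by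
  have hrev : ∀ b : ℝ, ∫ s in (0 : ℝ)..T,
      exp (-δ * (T - s)) * cos (b * (T - s) + α) * cos (b * (T - s) + β) =
      ∫ u in (0 : ℝ)..T, exp (-δ * u) * cos (b * u + α) * cos (b * u + β) := fun b => by
    simpa using intervalIntegral.integral_comp_sub_left
      (fun u => exp (-δ * u) * cos (b * u + α) * cos (b * u + β)) T (a := 0) (b := T)
  simpa only [hrev] using tendsto_intervalIntegral_mul_cos_mul_cos
    ((by fun_prop : Continuous fun u => exp (-δ * u)).intervalIntegrable 0 T) α β

theorem tendsto_intervalIntegral_exp_mul_sin_mul_cos_sub_pi_div_four (δ T : ℝ) :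
    Tendsto (fun b : ℝ => ∫ s in (0 : ℝ)..T,
        exp (-δ * (T - s)) * sin (b * (T - s)) * cos (b * (T - s) - π / 4)) atTop
      (nhds (√2 / 4 * ∫ u in (0 : ℝ)..T, exp (-δ * u))) := by
  have h := tendsto_intervalIntegral_exp_mul_cos_mul_cos_sub δ T (-(π / 2)) (-(π / 4))
  rw [show -(π / 2) - -(π / 4) = -(π / 4) by ring, cos_neg, cos_pi_div_four,
    show √2 / 2 / 2 = √2 / 4 by ring] at h
  simpa only [← sub_eq_add_neg, cos_sub_pi_div_two] using h

theorem tendsto_intervalIntegral_exp_mul_cos_mul_cos_sub_pi_div_four (δ T : ℝ) :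
    Tendsto (fun b : ℝ => ∫ s in (0 : ℝ)..T,
        exp (-δ * (T - s)) * cos (b * (T - s)) * cos (b * (T - s) - π / 4)) atTop
      (nhds (√2 / 4 * ∫ u in (0 : ℝ)..T, exp (-δ * u))) := by
  have h := tendsto_intervalIntegral_exp_mul_cos_mul_cos_sub δ T 0 (-(π / 4))
  rw [zero_sub, neg_neg, cos_pi_div_four, show √2 / 2 / 2 = √2 / 4 by ring] at h
  simpa only [add_zero, ← sub_eq_add_neg] using h

theorem tendsto_bl_atTop (δ : ℝ) : Tendsto (bl δ) atTop atTop :=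
  (tendsto_rpow_atTop (by norm_num)).comp
    (tendsto_atTop_add_const_right atTop (-δ ^ 2) tendsto_id)

theorem sigma_zero_counterexample_limits_general (δ T : ℝ) (hδ : 0 < δ) :
    Tendsto (fun lam : ℝ => lam ^ ((1 : ℝ) / 2) * uT δ T lam) atTop
      (nhds (Real.sqrt 2 / 4 * (1 / δ) * (1 - Real.exp (-δ * T)))) ∧
    Tendsto (fun lam : ℝ => uT' δ T lam) atTop
      (nhds (Real.sqrt 2 / 4 * (1 / δ) * (1 - Real.exp (-δ * T)))) := by
  set L := Real.sqrt 2 / 4 * (1 / δ) * (1 - Real.exp (-δ * T))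
  have hL : √2 / 4 * ∫ u in (0 : ℝ)..T, exp (-δ * u) = L := by
    rw [integral_exp_neg_mul hδ.ne']; ring
  have hb := tendsto_bl_atTop δ
  have hJ := (tendsto_intervalIntegral_exp_mul_sin_mul_cos_sub_pi_div_four δ T).comp hb
  have hK := (tendsto_intervalIntegral_exp_mul_cos_mul_cos_sub_pi_div_four δ T).comp hb
  rw [hL] at hJ hK
  have huT : Tendsto (uT δ T) atTop (nhds 0) := by
    have h := hb.inv_tendsto_atTop.mul hJ
    rw [zero_mul] at h
    exact h.congr fun lam => by rw [uT, one_div]; rfl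
  constructor
  · have h := (tendsto_rpow_div_rpow_sub_const (δ ^ 2) (1 / 2)).mul hJ
    rw [one_mul] at h
    exact h.congr fun lam => by simp only [uT, bl, Function.comp_apply]; ring
  · have h := (huT.const_mul (-δ)).add hK
    rw [mul_zero, zero_add] at h
    exact h.congr fun lam => by rw [uT']; rfl

/-- `λ^{1/2} u_λ(T) → (√2/4)(1/δ)(1 − e^{−δT})` and
`u_λ'(T) → (√2/4)(1/δ)(1 − e^{−δT})` as `λ → +∞`. -/
theorem sigma_zero_counterexample_limits (δ T : ℝ) (hδ : 0 < δ) (hT : 0 < T) :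
    Tendsto (fun lam : ℝ => lam ^ ((1 : ℝ) / 2) * uT δ T lam) atTop
      (nhds (Real.sqrt 2 / 4 * (1 / δ) * (1 - Real.exp (-δ * T)))) ∧
    Tendsto (fun lam : ℝ => uT' δ T lam) atTop
      (nhds (Real.sqrt 2 / 4 * (1 / δ) * (1 - Real.exp (-δ * T)))) :=
  sigma_zero_counterexample_limits_general δ T hδ
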